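/- arXiv:1910.11973 — 2 statements merged into one kernel-verified Lean document; each statement's English description precedes it below -/
import Mathlib

section
/- For any N-database K-message private information retrieval code, the average per-node storage cost α and average per-node download cost β satisfy (N-1)·α + β ≥ K. -/
open scoped Classical
open Real

noncomputable section

/-- A probability mass function on a finite sample space. -/
structure FinProb (Ω : Type) [Fintype Ω] where
  p : Ω → ℝ
  nonneg : ∀ ω, 0 ≤ p ω
  sum_one : ∑ ω, p ω = 1

namespace FinProb

variable {Ω : Type} [Fintype Ω]

/-- The probability of an event. -/
def prob (P : FinProb Ω) (E : Ω → Prop) : ℝ :=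
  ∑ ω, if E ω then P.p ω else 0

/-- The Shannon entropy (in bits) of a random variable `Z` (with the usual
convention `0 · log 0 = 0`, automatic since `Real.logb 2 0 = 0`). -/
def entH {σ : Type} (P : FinProb Ω) (Z : Ω → σ) : ℝ :=
  ∑ z ∈ Finset.univ.image Z,
    -(P.prob fun ω => Z ω = z) * Real.logb 2 (P.prob fun ω => Z ω = z)

/-- The conditional Shannon entropy (in bits) `H(Z | C)`. -/
def condH {σ τ : Type} (P : FinProb Ω) (Z : Ω → σ) (C : Ω → τ) : ℝ :=
  P.entH (fun ω => (Z ω, C ω)) - P.entH C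

end FinProb

/-- The uniform distribution on a finite nonempty set. -/
def uniformProb (Ω : Type) [Fintype Ω] [Nonempty Ω] : FinProb Ω where
  p _ := (Fintype.card Ω : ℝ)⁻¹
  nonneg _ := by positivity
  sum_one := by
    rw [Finset.sum_const, Finset.card_univ, nsmul_eq_mul,
      mul_inv_cancel₀ (by exact_mod_cast Fintype.card_ne_zero)]

/-- The sample space of a PIR code: a pair of (message realizations, random key).
The `K` messages each consist of `L` symbols from the alphabet `X`. -/
abbrev PIRSamp (K L : ℕ) (X F : Type) : Type := (Fin K → Fin L → X) × F

/-- The underlying probability distribution of a PIR code: the `K` messages are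
mutually independent, each uniform on `X^L`, and the random key is uniform on `F`
and independent of the messages; equivalently, `(W_{1:K}, F)` is uniform. -/
def pirP (K L : ℕ) (X F : Type) [Fintype X] [Nonempty X] [Fintype F] [Nonempty F] :
    FinProb (PIRSamp K L X F) := uniformProb _

/-- An `N`-database `K`-message private information retrieval code with message length `L`,
message alphabet `X`, answer alphabet `Y`, random-key set `F`, query sets `Q n` and
storage sets `S n`.  The stored content of database `n` is `store n` applied to the messages;
the query to database `n` is `query n k F`; the answer is a string of `len n q` symbols of `Y`
(a deterministic function of the query and the stored content); `correct` states that the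
desired message is a deterministic function of the answers and the random key, and `privacy`
states that the query distribution does not depend on the desired message index. -/
structure PIRCode (N K L : ℕ) (X Y F : Type) (Q S : Fin N → Type)
    [Fintype X] [Nonempty X] [Fintype Y] [Fintype F] [Nonempty F]
    [∀ n, Fintype (Q n)] [∀ n, Fintype (S n)] : Type where
  hN : 0 < N
  hK : 0 < K
  hL : 0 < L
  hX : 2 ≤ Fintype.card X
  store : (n : Fin N) → (Fin K → Fin L → X) → S n
  query : (n : Fin N) → Fin K → F → Q n
  len : (n : Fin N) → Q n → ℕ
  answer : (n : Fin N) → (q : Q n) → S n → (Fin (len n q) → Y)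
  correct : ∀ (k : Fin K) (ω ω' : PIRSamp K L X F), ω.2 = ω'.2 →
    (∀ n : Fin N, List.ofFn (answer n (query n k ω.2) (store n ω.1)) =
      List.ofFn (answer n (query n k ω'.2) (store n ω'.1))) →
    ω.1 k = ω'.1 k
  privacy : ∀ (n : Fin N) (k k' : Fin K) (q : Q n),
    (pirP K L X F).prob (fun ω => query n k ω.2 = q) =
      (pirP K L X F).prob (fun ω => query n k' ω.2 = q)

namespace PIRCode

variable {N K L : ℕ} {X Y F : Type} {Q S : Fin N → Type}
  [Fintype X] [Nonempty X] [Fintype Y] [Fintype F] [Nonempty F]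
  [∀ n, Fintype (Q n)] [∀ n, Fintype (S n)]

/-- Message `k` (0-indexed) as a random variable. -/
def Wrv (_c : PIRCode N K L X Y F Q S) (k : Fin K) : PIRSamp K L X F → (Fin L → X) :=
  fun ω => ω.1 k

/-- The random key as a random variable. -/
def Frv (_c : PIRCode N K L X Y F Q S) : PIRSamp K L X F → F := fun ω => ω.2

/-- The stored content `S_n` as a random variable. -/
def Srv (c : PIRCode N K L X Y F Q S) (n : Fin N) : PIRSamp K L X F → S n :=
  fun ω => c.store n ω.1

/-- The query `Q_n^{[k]}` as a random variable. -/
def Qrv (c : PIRCode N K L X Y F Q S) (n : Fin N) (k : Fin K) : PIRSamp K L X F → Q n :=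
  fun ω => c.query n k ω.2

/-- The answer string `A_n^{[k]}` of database `n` when retrieving message `k`. -/
def Arv (c : PIRCode N K L X Y F Q S) (n : Fin N) (k : Fin K) : PIRSamp K L X F → List Y :=
  fun ω => List.ofFn (c.answer n (c.query n k ω.2) (c.store n ω.1))

/-- The answer string `A_n^{(q)}` of database `n` to the fixed query `q`. -/
def AnsFix (c : PIRCode N K L X Y F Q S) (n : Fin N) (q : Q n) : PIRSamp K L X F → List Y :=
  fun ω => List.ofFn (c.answer n q (c.store n ω.1))

/-- The operational storage cost `α_n = log₂|𝒮_n| / (L log₂|X|)` of database `n`. -/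
def alphaN (_c : PIRCode N K L X Y F Q S) (n : Fin N) : ℝ :=
  Real.logb 2 (Fintype.card (S n)) / (L * Real.logb 2 (Fintype.card X))

/-- The average per-node storage cost `α`. -/
def alphaAvg (c : PIRCode N K L X Y F Q S) : ℝ := (∑ n, c.alphaN n) / N

/-- The expected answer length `E[ℓ_n(Q_n^{[k]})]`. -/
def expLen (c : PIRCode N K L X Y F Q S) (n : Fin N) (k : Fin K) : ℝ :=
  ∑ ω : PIRSamp K L X F, (pirP K L X F).p ω * (c.len n (c.query n k ω.2))

/-- The operational download cost of database `n` for message index `k`: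
`E[ℓ_n(Q_n^{[k]})]·log₂|Y| / (L log₂|X|)`. -/
def betaNK (c : PIRCode N K L X Y F Q S) (n : Fin N) (k : Fin K) : ℝ :=
  c.expLen n k * Real.logb 2 (Fintype.card Y) / (L * Real.logb 2 (Fintype.card X))

/-- The operational download cost `β_n` of database `n` (independent of the retrieved
message index by privacy, hence evaluated at the first message). -/
def betaN (c : PIRCode N K L X Y F Q S) (n : Fin N) : ℝ := c.betaNK n ⟨0, c.hK⟩

/-- The average per-node download cost `β`. -/
def betaAvg (c : PIRCode N K L X Y F Q S) : ℝ := (∑ n, c.betaN n) / N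

/-- The informational storage cost `α'_n = H(S_n) / (L log₂|X|)`. -/
def alphaInfoN (c : PIRCode N K L X Y F Q S) (n : Fin N) : ℝ :=
  (pirP K L X F).entH (c.Srv n) / (L * Real.logb 2 (Fintype.card X))

/-- The informational download cost `β'_n = H(A_n^{[k]} | F) / (L log₂|X|)`. -/
def betaInfoNK (c : PIRCode N K L X Y F Q S) (n : Fin N) (k : Fin K) : ℝ :=
  (pirP K L X F).condH (c.Arv n k) c.Frv / (L * Real.logb 2 (Fintype.card X))

/-- The first `m` messages `W_{1:m}` as a single random variable (messages with
0-indexed position `≥ m` are blanked out by `none`). -/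
def WleRv (_c : PIRCode N K L X Y F Q S) (m : ℕ) :
    PIRSamp K L X F → (Fin K → Option (Fin L → X)) :=
  fun ω i => if (i : ℕ) < m then some (ω.1 i) else none

/-- All answers `A_{1:N}^{[k]}` as a single random variable. -/
def AallRv (c : PIRCode N K L X Y F Q S) (k : Fin K) : PIRSamp K L X F → (Fin N → List Y) :=
  fun ω n => c.Arv n k ω

/-- The answers `A_{1:n-1,n+1:N}^{[k]}` of all databases except database `n`. -/
def AexcRv (c : PIRCode N K L X Y F Q S) (n : Fin N) (k : Fin K) :
    PIRSamp K L X F → (Fin N → Option (List Y)) :=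
  fun ω n' => if n' = n then none else some (c.Arv n' k ω)

/-- The stored contents `S_{1:n-1,n+1:N}` of all databases except database `n`. -/
def SexcRv (c : PIRCode N K L X Y F Q S) (n : Fin N) :
    PIRSamp K L X F → ((n' : Fin N) → Option (S n')) :=
  fun ω n' => if n' = n then none else some (c.store n' ω.1)

/-- `T^k = H(A_{1:N}^{[k]} | W_{1:k}, F)`; here `k : Fin K` is the 0-indexed message
index, corresponding to the paper's message index `k+1`. -/
def T (c : PIRCode N K L X Y F Q S) (k : Fin K) : ℝ :=
  (pirP K L X F).condH (c.AallRv k) (fun ω => (c.WleRv ((k : ℕ) + 1) ω, ω.2))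

/-- `V_n^k = H(A_{1:n-1,n+1:N}^{[k]}, S_n | W_{1:k}, F)` (0-indexed `k`, as in `T`). -/
def Vnk (c : PIRCode N K L X Y F Q S) (n : Fin N) (k : Fin K) : ℝ :=
  (pirP K L X F).condH (fun ω => (c.AexcRv n k ω, c.Srv n ω))
    (fun ω => (c.WleRv ((k : ℕ) + 1) ω, ω.2))

/-- `V^k = (1/N) Σ_n V_n^k`. -/
def Vavg (c : PIRCode N K L X Y F Q S) (k : Fin K) : ℝ := (∑ n, c.Vnk n k) / N

end PIRCode

namespace FinProb
variable {Ω : Type} [Fintype Ω] {σ τ : Type}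

lemma prob_nonneg (P : FinProb Ω) (E : Ω → Prop) : 0 ≤ P.prob E :=
  Finset.sum_nonneg fun ω _ => by by_cases h : E ω <;> simp [h, P.nonneg ω]

lemma prob_mono (P : FinProb Ω) {E E' : Ω → Prop} (h : ∀ ω, E ω → E' ω) :
    P.prob E ≤ P.prob E' := by
  refine Finset.sum_le_sum fun ω _ => ?_
  by_cases hE : E ω
  · simp [hE, h ω hE]
  · by_cases hE' : E' ω <;> simp [hE, hE', P.nonneg ω]

lemma prob_congr (P : FinProb Ω) {E E' : Ω → Prop} (h : ∀ ω, E ω ↔ E' ω) :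
    P.prob E = P.prob E' := by
  unfold prob; exact Finset.sum_congr rfl fun ω _ => by rw [eq_iff_iff.2 (h ω)]

lemma sum_prob_image (P : FinProb Ω) (Z : Ω → σ) :
    ∑ z ∈ Finset.univ.image Z, P.prob (fun ω => Z ω = z) = 1 := by
  unfold prob
  rw [Finset.sum_comm]
  rw [← P.sum_one]
  refine Finset.sum_congr rfl fun ω _ => ?_
  rw [Finset.sum_ite_eq (Finset.univ.image Z) (Z ω) (fun _ => P.p ω)]
  simp

lemma prob_eq_sum_filter (P : FinProb Ω) (E : Ω → Prop) :
    P.prob E = ∑ ω ∈ Finset.univ.filter E, P.p ω :=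
  (Finset.sum_filter E P.p).symm

lemma prob_decomp (P : FinProb Ω) (Z : Ω → σ) (C : Ω → τ) (c : τ) :
    P.prob (fun ω => C ω = c) =
      ∑ zc ∈ (Finset.univ.image (fun ω => (Z ω, C ω))).filter (fun zc => zc.2 = c),
        P.prob (fun ω => (Z ω, C ω) = zc) := by
  simp_rw [prob_eq_sum_filter]
  rw [← Finset.sum_fiberwise_of_maps_to
    (g := fun ω => (Z ω, C ω)) (s := Finset.univ.filter (fun ω => C ω = c))
    (t := (Finset.univ.image (fun ω => (Z ω, C ω))).filter (fun zc => zc.2 = c))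
    (fun ω hω => Finset.mem_filter.2
      ⟨Finset.mem_image_of_mem _ (Finset.mem_univ ω), (Finset.mem_filter.1 hω).2⟩) P.p]
  refine Finset.sum_congr rfl fun zc hzc => ?_
  congr 1
  ext ω
  simp only [Finset.mem_filter, Finset.mem_univ, true_and]
  constructor
  · intro h
    exact h.2
  · intro h
    refine ⟨?_, h⟩
    rw [← (Finset.mem_filter.1 hzc).2, ← h]

/-- Conditioning: the entropy of a pair is at least the entropy of a component. -/
lemma entH_snd_le (P : FinProb Ω) (Z : Ω → σ) (C : Ω → τ) :
    P.entH C ≤ P.entH (fun ω => (Z ω, C ω)) := by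
  unfold entH
  letI : DecidableEq (σ × τ) := fun a b => Classical.propDecidable (a = b)
  letI : DecidableEq τ := fun a b => Classical.propDecidable (a = b)
  refine le_trans ?_ (le_of_eq (Finset.sum_fiberwise_of_maps_to
    (g := Prod.snd) (s := Finset.univ.image (fun ω => (Z ω, C ω)))
    (t := Finset.univ.image C)
    (fun zc hzc => by
      obtain ⟨ω, -, rfl⟩ := Finset.mem_image.1 hzc
      exact Finset.mem_image_of_mem C (Finset.mem_univ ω))
    (fun zc => -(P.prob fun ω => (Z ω, C ω) = zc) *
      Real.logb 2 (P.prob fun ω => (Z ω, C ω) = zc))))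
  refine Finset.sum_le_sum fun c _ => ?_
  set Lc := Real.logb 2 (P.prob fun ω => C ω = c) with hLc
  have hPc := prob_decomp P Z C c
  calc -(P.prob fun ω => C ω = c) * Lc
      = ∑ zc ∈ (Finset.univ.image (fun ω => (Z ω, C ω))).filter (fun zc => zc.2 = c),
          -(P.prob fun ω => (Z ω, C ω) = zc) * Lc := by
        rw [hPc, ← Finset.sum_neg_distrib, Finset.sum_mul]
        refine Finset.sum_congr ?_ fun _ _ => rfl
        ext zc
        simp [Finset.mem_filter, Finset.mem_image]
    _ ≤ ∑ zc ∈ (Finset.univ.image (fun ω => (Z ω, C ω))).filter (fun zc => zc.2 = c),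
          -(P.prob fun ω => (Z ω, C ω) = zc) *
            Real.logb 2 (P.prob fun ω => (Z ω, C ω) = zc) := by
        refine Finset.sum_le_sum fun zc hzc => ?_
        have hz2 : zc.2 = c := (Finset.mem_filter.1 hzc).2
        have hle : (P.prob fun ω => (Z ω, C ω) = zc) ≤ (P.prob fun ω => C ω = c) :=
          prob_mono P fun ω h => by rw [← hz2, ← h]
        rcases eq_or_lt_of_le (prob_nonneg P (fun ω => (Z ω, C ω) = zc)) with h0 | h0
        · rw [← h0]; simp
        · have : Real.logb 2 (P.prob fun ω => (Z ω, C ω) = zc) ≤ Lc := by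
            rw [hLc]
            exact Real.logb_le_logb_of_le (by norm_num) h0 hle
          nlinarith [h0.le]

/-- Random variables with the same fibers have the same entropy. -/
lemma entH_congr_fiber (P : FinProb Ω) (Z : Ω → σ) (Z' : Ω → τ)
    (h : ∀ ω ω', Z ω = Z ω' ↔ Z' ω = Z' ω') : P.entH Z = P.entH Z' := by
  unfold entH
  refine Finset.sum_bij (i := fun z hz => Z' (Finset.mem_image.1 hz).choose) ?_ ?_ ?_ ?_
  · intro z hz
    exact Finset.mem_image_of_mem Z' (Finset.mem_univ _)
  · intro z₁ hz₁ z₂ hz₂ heq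
    have h₁ := (Finset.mem_image.1 hz₁).choose_spec.2
    have h₂ := (Finset.mem_image.1 hz₂).choose_spec.2
    rw [← h₁, ← h₂]
    exact (h _ _).2 heq
  · intro b hb
    obtain ⟨ω, -, rfl⟩ := Finset.mem_image.1 hb
    refine ⟨Z ω, Finset.mem_image_of_mem Z (Finset.mem_univ ω), ?_⟩
    have := (Finset.mem_image.1 (Finset.mem_image_of_mem Z (Finset.mem_univ ω))).choose_spec.2
    exact (h _ _).1 this
  · intro z hz
    have hspec := (Finset.mem_image.1 hz).choose_spec.2
    have hpr : (P.prob fun ω => Z ω = z) =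
        (P.prob fun ω => Z' ω = Z' (Finset.mem_image.1 hz).choose) := by
      refine prob_congr P fun ω => ?_
      have hh := h ω (Finset.mem_image.1 hz).choose
      rw [hspec] at hh
      exact hh
    rw [hpr]

lemma uniform_p_eq [Nonempty Ω] (ω : Ω) : (uniformProb Ω).p ω = ((Fintype.card Ω : ℝ))⁻¹ := rfl

lemma uniform_prob_eq [Nonempty Ω] (E : Ω → Prop) :
    (uniformProb Ω).prob E = ((Finset.univ.filter E).card : ℝ) / Fintype.card Ω := by
  rw [prob_eq_sum_filter]
  simp only [uniform_p_eq]
  rw [Finset.sum_const, nsmul_eq_mul, div_eq_mul_inv]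

/-- Max-entropy bound for the uniform distribution. -/
lemma entH_le_logb_card [Nonempty Ω] (Z : Ω → σ) :
    (uniformProb Ω).entH Z ≤ Real.logb 2 ((Finset.univ.image Z).card) := by
  set P := uniformProb Ω with hP
  set T := Finset.univ.image Z with hT
  have hpos : ∀ z ∈ T, 0 < P.prob (fun ω => Z ω = z) := by
    intro z hz
    obtain ⟨ω, -, rfl⟩ := Finset.mem_image.1 hz
    have h1 : P.p ω ≤ P.prob (fun ω' => Z ω' = Z ω) := by
      rw [prob_eq_sum_filter]
      exact Finset.single_le_sum (f := P.p) (fun i _ => P.nonneg i)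
        (Finset.mem_filter.2 ⟨Finset.mem_univ ω, rfl⟩)
    have h2 : (0:ℝ) < P.p ω := by
      rw [hP, uniform_p_eq]
      have : 0 < Fintype.card Ω := Fintype.card_pos
      positivity
    linarith
  have hjensen : ∑ z ∈ T, (P.prob fun ω => Z ω = z) •
        Real.log ((P.prob fun ω => Z ω = z))⁻¹ ≤
      Real.log (∑ z ∈ T, (P.prob fun ω => Z ω = z) • ((P.prob fun ω => Z ω = z))⁻¹) := by
    refine (strictConcaveOn_log_Ioi.concaveOn).le_map_sum
      (fun z hz => prob_nonneg P _) (sum_prob_image P Z) ?_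
    intro z hz
    exact Set.mem_Ioi.2 (inv_pos.2 (hpos z hz))
  have hsum1 : ∑ z ∈ T, (P.prob fun ω => Z ω = z) • ((P.prob fun ω => Z ω = z))⁻¹
      = (T.card : ℝ) := by
    rw [Finset.sum_congr rfl (fun z hz => ?_)]
    · rw [Finset.sum_const, nsmul_eq_mul, mul_one]
    · rw [smul_eq_mul, mul_inv_cancel₀ (hpos z hz).ne']
  have hent : P.entH Z = (Real.log 2)⁻¹ *
      ∑ z ∈ T, (P.prob fun ω => Z ω = z) • Real.log ((P.prob fun ω => Z ω = z))⁻¹ := by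
    unfold entH
    rw [Finset.mul_sum]
    refine Finset.sum_congr rfl fun z hz => ?_
    rw [smul_eq_mul, Real.log_inv, Real.logb]
    ring
  rw [hent, Real.logb, div_eq_inv_mul]
  have hlog2 : (0:ℝ) < Real.log 2 := Real.log_pos (by norm_num)
  have h2 := hjensen.trans (le_of_eq (by rw [hsum1]))
  exact mul_le_mul_of_nonneg_left h2 (by positivity)

/-- Entropy of a variable whose fibers all have the same probability. -/
lemma entH_of_const_prob (P : FinProb Ω) (Z : Ω → σ)
    (hne : (Finset.univ.image Z).Nonempty)
    (h : ∀ z ∈ Finset.univ.image Z, P.prob (fun ω => Z ω = z)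
      = (((Finset.univ.image Z).card : ℝ))⁻¹) :
    P.entH Z = Real.logb 2 ((Finset.univ.image Z).card) := by
  unfold entH
  set M := (Finset.univ.image Z).card with hM
  have hMpos : 0 < M := Finset.card_pos.2 hne
  have hMR : (0:ℝ) < (M:ℝ) := by exact_mod_cast hMpos
  rw [Finset.sum_congr rfl (fun z hz => by rw [h z hz])]
  rw [Finset.sum_const, Real.logb_inv, nsmul_eq_mul, ← hM]
  field_simp

/-- Entropy is invariant under relabeling the sample space by an equivalence
(for the uniform distribution). -/
lemma entH_equiv {Ω' : Type} [Fintype Ω'] [Nonempty Ω] [Nonempty Ω']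
    (e : Ω ≃ Ω') (Z : Ω' → σ) :
    (uniformProb Ω).entH (fun ω => Z (e ω)) = (uniformProb Ω').entH Z := by
  unfold entH
  have himg : Finset.univ.image (fun ω => Z (e ω)) = Finset.univ.image Z := by
    ext z
    simp only [Finset.mem_image, Finset.mem_univ, true_and]
    constructor
    · rintro ⟨ω, hω⟩; exact ⟨e ω, hω⟩
    · rintro ⟨ω', hω'⟩; exact ⟨e.symm ω', by simpa using hω'⟩
  rw [himg]
  refine Finset.sum_congr rfl fun z hz => ?_
  have hcard : (Finset.univ.filter (fun ω => Z (e ω) = z)).card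
      = (Finset.univ.filter (fun ω' => Z ω' = z)).card := by
    refine Finset.card_bij (fun ω _ => e ω) ?_ ?_ ?_
    · intro ω hω
      exact Finset.mem_filter.2 ⟨Finset.mem_univ _, (Finset.mem_filter.1 hω).2⟩
    · intro ω₁ h₁ ω₂ h₂ heq
      exact e.injective heq
    · intro ω' hω'
      exact ⟨e.symm ω', Finset.mem_filter.2 ⟨Finset.mem_univ _,
        by simpa using (Finset.mem_filter.1 hω').2⟩, by simp⟩
  have hprob : (uniformProb Ω).prob (fun ω => Z (e ω) = z)
      = (uniformProb Ω').prob (fun ω' => Z ω' = z) := by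
    rw [uniform_prob_eq, uniform_prob_eq, hcard, Fintype.card_congr e]
  rw [hprob]

end FinProb

section ProdSpace
open FinProb
variable {A B : Type} [Fintype A] [Fintype B]

lemma card_filter_snd [Nonempty A] (E : B → Prop) :
    (Finset.univ.filter (fun ω : A × B => E ω.2)).card
      = Fintype.card A * (Finset.univ.filter E).card := by
  rw [← Fintype.card_subtype, ← Fintype.card_subtype]
  rw [← Fintype.card_prod]
  exact Fintype.card_congr
    ⟨fun x => (x.1.1, ⟨x.1.2, x.2⟩), fun y => ⟨(y.1, y.2.1), y.2.2⟩,
     fun x => rfl, fun y => rfl⟩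

lemma uniform_prob_snd [Nonempty A] [Nonempty B] (E : B → Prop) :
    (uniformProb (A × B)).prob (fun ω => E ω.2)
      = ((Finset.univ.filter E).card : ℝ) / Fintype.card B := by
  rw [uniform_prob_eq, card_filter_snd, Fintype.card_prod]
  have hA : (0:ℝ) < Fintype.card A := by exact_mod_cast Fintype.card_pos
  push_cast
  rw [mul_div_mul_left _ _ hA.ne']

lemma card_filter_fst_eq [Nonempty B] (a : A) :
    (Finset.univ.filter (fun ω : A × B => ω.1 = a)).card = Fintype.card B := by
  rw [← Fintype.card_subtype]
  exact Fintype.card_congr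
    ⟨fun x => x.1.2, fun b => ⟨(a, b), rfl⟩,
     fun x => Subtype.ext (Prod.ext x.2.symm rfl), fun b => rfl⟩

lemma entH_fst [Nonempty A] [Nonempty B] :
    (uniformProb (A × B)).entH (fun ω => ω.1) = Real.logb 2 (Fintype.card A) := by
  have himg : Finset.univ.image (fun ω : A × B => ω.1) = (Finset.univ : Finset A) := by
    ext a
    simp only [Finset.mem_image, Finset.mem_univ, true_and, iff_true]
    exact ⟨(a, Classical.arbitrary B), rfl⟩
  have hM : (Finset.univ.image (fun ω : A × B => ω.1)).card = Fintype.card A := by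
    rw [himg, Finset.card_univ]
  rw [← hM]
  refine entH_of_const_prob _ _ ?_ ?_
  · rw [himg]; exact Finset.univ_nonempty
  · intro a ha
    rw [uniform_prob_eq, card_filter_fst_eq, hM, Fintype.card_prod]
    have hB : (0:ℝ) < Fintype.card B := by exact_mod_cast Fintype.card_pos
    have hA : (0:ℝ) < Fintype.card A := by exact_mod_cast Fintype.card_pos
    push_cast
    rw [mul_comm, ← div_div, div_self hB.ne', one_div]

lemma sum_comp_eq_of_card_fiber_eq {α γ : Type} [Fintype α] [Fintype γ] (g g' : α → γ)
    (hc : ∀ q, (Finset.univ.filter (fun f => g f = q)).card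
      = (Finset.univ.filter (fun f => g' f = q)).card)
    (φ : γ → ℝ) : ∑ f, φ (g f) = ∑ f, φ (g' f) := by
  have key : ∀ h : α → γ, ∑ f, φ (h f)
      = ∑ q, ((Finset.univ.filter (fun f => h f = q)).card : ℝ) * φ q := by
    intro h
    rw [← Finset.sum_fiberwise_of_maps_to (g := h) (t := Finset.univ)
      (fun f _ => Finset.mem_univ (h f)) (fun f => φ (h f))]
    refine Finset.sum_congr rfl fun q _ => ?_
    rw [Finset.sum_congr rfl (fun f hf => by rw [(Finset.mem_filter.1 hf).2]),
      Finset.sum_const, nsmul_eq_mul]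
  rw [key g, key g']
  refine Finset.sum_congr rfl fun q _ => by rw [hc q]

end ProdSpace


section PIRProof

open FinProb

variable {N K L : ℕ} {X Y F : Type} {Q S : Fin N → Type}
  [Fintype X] [Nonempty X] [Fintype Y] [Fintype F] [Nonempty F]
  [∀ n, Fintype (Q n)] [∀ n, Fintype (S n)]

/-- The first `j` messages, as a variable on message space. -/
def pcWle (K L : ℕ) (X : Type) (j : ℕ) :
    (Fin K → Fin L → X) → (Fin K → Option (Fin L → X)) :=
  fun w i => if (i : ℕ) < j then some (w i) else none

lemma pcWle_eq_iff {j : ℕ} {w w' : Fin K → Fin L → X} :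
    pcWle K L X j w = pcWle K L X j w' ↔ ∀ i : Fin K, (i : ℕ) < j → w i = w' i := by
  constructor
  · intro h i hi
    have := congrFun h i
    simpa [pcWle, hi] using this
  · intro h
    funext i
    by_cases hi : (i : ℕ) < j
    · simp [pcWle, hi, h i hi]
    · simp [pcWle, hi]

/-- The pair (answer of database `n` to fixed query `q`, stored contents of the other
databases), as a variable on message space. -/
def pcZ (c : PIRCode N K L X Y F Q S) (n : Fin N) (q : Q n) :
    (Fin K → Fin L → X) → ((Fin (c.len n q) → Y) × ((m : {m : Fin N // m ≠ n}) → S m.1)) :=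
  fun w => (c.answer n q (c.store n w), fun m => c.store m.1 w)

/-- `ψ_n^{(q)}(j) = H(A_n^{(q)}, S_{\bar n}, W_{1:j})` over the uniform message space. -/
def pcPsi (c : PIRCode N K L X Y F Q S) (n : Fin N) (q : Q n) (j : ℕ) : ℝ :=
  (uniformProb (Fin K → Fin L → X)).entH (fun w => (pcZ c n q w, pcWle K L X j w))

/-- `H(W_{1:j})` over the uniform message space. -/
def pcHW (K L : ℕ) (X : Type) [Fintype X] [Nonempty X] (j : ℕ) : ℝ :=
  (uniformProb (Fin K → Fin L → X)).entH (pcWle K L X j)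

lemma pcHW_eq (hK0 : 0 < K) (hL0 : 0 < L) {j : ℕ} (hj : j ≤ K) :
    pcHW K L X j = (j * L : ℕ) * Real.logb 2 (Fintype.card X) := by
  classical
  set p : Fin K → Prop := fun i => (i : ℕ) < j with hp
  set e := Equiv.piEquivPiSubtypeProd p (fun _ : Fin K => Fin L → X) with he
  have hfib : ∀ w w' : Fin K → Fin L → X,
      pcWle K L X j w = pcWle K L X j w' ↔ (e w).1 = (e w').1 := by
    intro w w'
    rw [pcWle_eq_iff]
    constructor
    · intro h
      funext i
      exact h i.1 i.2
    · intro h i hi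
      exact congrFun h ⟨i, hi⟩
  have h1 : pcHW K L X j = (uniformProb (Fin K → Fin L → X)).entH (fun w => (e w).1) :=
    entH_congr_fiber _ _ _ hfib
  have h2 : (uniformProb (Fin K → Fin L → X)).entH (fun w => (e w).1)
      = (uniformProb (({i : Fin K // p i} → Fin L → X) × ({i : Fin K // ¬ p i} → Fin L → X))).entH
        (fun ω => ω.1) := by
    exact entH_equiv e (fun ω => ω.1)
  have h3 := entH_fst (A := {i : Fin K // p i} → Fin L → X)
    (B := {i : Fin K // ¬ p i} → Fin L → X)
  have hsub : Fintype.card {i : Fin K // p i} = j := by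
    have : Fintype.card {i : Fin K // p i} = Fintype.card (Fin j) :=
      Fintype.card_congr
        ⟨fun i => ⟨i.1.1, i.2⟩, fun t => ⟨⟨t.1, lt_of_lt_of_le t.2 hj⟩, t.2⟩,
         fun i => Subtype.ext (Fin.ext rfl), fun t => Fin.ext rfl⟩
    rw [this, Fintype.card_fin]
  have hcard : Fintype.card ({i : Fin K // p i} → Fin L → X)
      = (Fintype.card X) ^ (j * L) := by
    rw [Fintype.card_fun, Fintype.card_fun, Fintype.card_fin, hsub, ← pow_mul,
      Nat.mul_comm]
  rw [h1, h2, h3, hcard]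
  push_cast [Real.logb_pow]
  ring

/-- Decoding: revealing message `k` does not change the joint entropy. -/
lemma pcPsi_decode (c : PIRCode N K L X Y F Q S) (n : Fin N) (f : F) (k : Fin K) :
    pcPsi c n (c.query n k f) (k : ℕ) = pcPsi c n (c.query n k f) ((k : ℕ) + 1) := by
  refine entH_congr_fiber _ _ _ fun w w' => ?_
  constructor
  · intro h
    have hZ := congrArg Prod.fst h
    have hW := congrArg Prod.snd h
    refine Prod.ext hZ ?_
    have hwk : w k = w' k := by
      refine c.correct k (w, f) (w', f) rfl fun m => ?_
      by_cases hm : m = n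
      · subst hm
        exact congrArg List.ofFn (congrArg Prod.fst hZ : _)
      · have hs := congrFun (congrArg Prod.snd hZ) ⟨m, hm⟩
        simp only [pcZ] at hs
        exact congrArg (fun s => List.ofFn (c.answer m (c.query m k f) s)) hs
    dsimp only at hW ⊢
    rw [pcWle_eq_iff] at hW ⊢
    intro i hi
    rcases Nat.lt_or_ge (i : ℕ) (k : ℕ) with h | h
    · exact hW i h
    · have : (i : ℕ) = (k : ℕ) := by omega
      have : i = k := Fin.ext this
      rw [this]
      exact hwk
  · intro h
    have hZ := congrArg Prod.fst h
    have hW := congrArg Prod.snd h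
    refine Prod.ext hZ ?_
    dsimp only at hW ⊢
    rw [pcWle_eq_iff] at hW ⊢
    intro i hi
    exact hW i (by omega)

/-- Privacy: the fibers of the query maps for different message indices have equal sizes. -/
lemma pc_privacy_count (c : PIRCode N K L X Y F Q S) (n : Fin N) (k k' : Fin K) (q : Q n) :
    (Finset.univ.filter (fun f : F => c.query n k f = q)).card
      = (Finset.univ.filter (fun f : F => c.query n k' f = q)).card := by
  have h := c.privacy n k k' q
  have h1 := uniform_prob_snd (A := Fin K → Fin L → X) (B := F)
    (fun f => c.query n k f = q)
  have h2 := uniform_prob_snd (A := Fin K → Fin L → X) (B := F)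
    (fun f => c.query n k' f = q)
  have hP : (pirP K L X F) = uniformProb ((Fin K → Fin L → X) × F) := rfl
  rw [hP, h1, h2] at h
  have hF : (0:ℝ) < Fintype.card F := by exact_mod_cast Fintype.card_pos
  rw [div_eq_div_iff hF.ne' hF.ne'] at h
  have := mul_right_cancel₀ hF.ne' h
  exact_mod_cast this

/-- Privacy: sums over the key of any function of the query agree across message indices. -/
lemma pc_privacy_sum (c : PIRCode N K L X Y F Q S) (n : Fin N) (k k' : Fin K)
    (φ : Q n → ℝ) : ∑ f : F, φ (c.query n k f) = ∑ f : F, φ (c.query n k' f) :=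
  sum_comp_eq_of_card_fiber_eq _ _ (pc_privacy_count c n k k' · ) φ

/-- The chain of equalities: the starting joint entropy equals the ending one. -/
lemma pc_chain (c : PIRCode N K L X Y F Q S) (n : Fin N) :
    ∀ m : ℕ, (hm : m < K) →
      ∑ f : F, pcPsi c n (c.query n ⟨0, c.hK⟩ f) 0
        = ∑ f : F, pcPsi c n (c.query n ⟨m, hm⟩ f) m := by
  intro m
  induction m with
  | zero => intro hm; rfl
  | succ m ih =>
    intro hm
    have hmK : m < K := by omega
    rw [ih hmK]
    have hstep : ∑ f : F, pcPsi c n (c.query n ⟨m, hmK⟩ f) m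
        = ∑ f : F, pcPsi c n (c.query n ⟨m, hmK⟩ f) (m + 1) := by
      refine Finset.sum_congr rfl fun f _ => ?_
      exact pcPsi_decode c n f ⟨m, hmK⟩
    rw [hstep]
    exact pc_privacy_sum c n ⟨m, hmK⟩ ⟨m + 1, hm⟩ (fun q => pcPsi c n q (m + 1))

lemma pc_psi_ge (c : PIRCode N K L X Y F Q S) (n : Fin N) (q : Q n) :
    pcHW K L X K ≤ pcPsi c n q K :=
  entH_snd_le _ _ _

lemma pc_psi_zero_le (c : PIRCode N K L X Y F Q S) (n : Fin N) (q : Q n) :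
    pcPsi c n q 0 ≤ (c.len n q : ℝ) * Real.logb 2 (Fintype.card Y)
      + ∑ m ∈ Finset.univ.erase n, Real.logb 2 (Fintype.card (S m)) := by
  classical
  have w₀ : Fin K → Fin L → X := Classical.arbitrary _
  haveI hSne : ∀ m : Fin N, Nonempty (S m) := fun m => ⟨c.store m w₀⟩
  haveI hAne : Nonempty (Fin (c.len n q) → Y) := ⟨c.answer n q (c.store n w₀)⟩
  letI : DecidableEq ((Fin (c.len n q) → Y) × ((m : {m : Fin N // m ≠ n}) → S m.1)) :=
    fun a b => Classical.propDecidable (a = b)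
  have h0 : pcPsi c n q 0 = (uniformProb (Fin K → Fin L → X)).entH (pcZ c n q) := by
    refine entH_congr_fiber _ _ _ fun w w' => ?_
    constructor
    · intro h
      exact congrArg Prod.fst h
    · intro hZ
      refine Prod.ext hZ ?_
      dsimp only
      rw [pcWle_eq_iff]
      intro i hi
      omega
  rw [h0]
  have h1 := entH_le_logb_card (Z := pcZ c n q)
  have h2 : ((Finset.univ.image (pcZ c n q)).card : ℝ)
      ≤ (Fintype.card ((Fin (c.len n q) → Y) × ((m : {m : Fin N // m ≠ n}) → S m.1)) : ℝ) := by
    exact_mod_cast Finset.card_le_univ _ |>.trans (le_of_eq (Finset.card_univ))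
  have hpos : (0:ℝ) < ((Finset.univ.image (pcZ c n q)).card : ℝ) := by
    have : (Finset.univ.image (pcZ c n q)).Nonempty :=
      ⟨pcZ c n q w₀, Finset.mem_image_of_mem _ (Finset.mem_univ w₀)⟩
    exact_mod_cast Finset.card_pos.2 this
  have h3 : Real.logb 2 ((Finset.univ.image (pcZ c n q)).card)
      ≤ Real.logb 2 (Fintype.card ((Fin (c.len n q) → Y) × ((m : {m : Fin N // m ≠ n}) → S m.1))) :=
    Real.logb_le_logb_of_le (by norm_num) hpos h2
  refine h1.trans (h3.trans ?_)
  have hYcard : Fintype.card (Fin (c.len n q) → Y) = (Fintype.card Y) ^ (c.len n q) := by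
    rw [Fintype.card_fun, Fintype.card_fin]
  have hScard : Fintype.card ((m : {m : Fin N // m ≠ n}) → S m.1)
      = ∏ m ∈ Finset.univ.erase n, Fintype.card (S m) := by
    rw [Fintype.card_pi]
    exact (Finset.prod_subtype (Finset.univ.erase n)
      (by intro x; simp [Finset.mem_erase]) (fun m => Fintype.card (S m))).symm
  have hYpos : 0 < Fintype.card (Fin (c.len n q) → Y) := Fintype.card_pos
  have hSpos : ∀ m ∈ Finset.univ.erase n, (0:ℝ) < (Fintype.card (S m) : ℝ) := by
    intro m _
    exact_mod_cast Fintype.card_pos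
  have hSprodpos : (0:ℝ) < ∏ m ∈ Finset.univ.erase n, (Fintype.card (S m) : ℝ) :=
    Finset.prod_pos hSpos
  have hYR : (0:ℝ) < (Fintype.card Y : ℝ) ^ (c.len n q) := by
    have := hYpos
    rw [hYcard] at this
    exact_mod_cast this
  rw [Fintype.card_prod, hYcard, hScard]
  push_cast
  rw [Real.logb_mul hYR.ne' hSprodpos.ne']
  rw [Real.logb_pow]
  have hlogprod : Real.logb 2 (∏ m ∈ Finset.univ.erase n, (Fintype.card (S m) : ℝ))
      = ∑ m ∈ Finset.univ.erase n, Real.logb 2 (Fintype.card (S m)) := by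
    rw [Real.logb, Real.log_prod (fun m hm => (hSpos m hm).ne'), Finset.sum_div]
    rfl
  rw [hlogprod]

lemma pc_expLen (c : PIRCode N K L X Y F Q S) (n : Fin N) (k : Fin K) :
    (Fintype.card F : ℝ) * c.expLen n k = ∑ f : F, (c.len n (c.query n k f) : ℝ) := by
  unfold PIRCode.expLen
  have hp : ∀ ω : PIRSamp K L X F, (pirP K L X F).p ω
      = ((Fintype.card (Fin K → Fin L → X) : ℝ) * (Fintype.card F : ℝ))⁻¹ := by
    intro ω
    show ((Fintype.card (PIRSamp K L X F) : ℝ))⁻¹ = _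
    rw [Fintype.card_prod]
    push_cast
    ring
  rw [Finset.sum_congr rfl (fun ω _ => by rw [hp ω])]
  rw [Fintype.sum_prod_type]
  have hW : (0:ℝ) < Fintype.card (Fin K → Fin L → X) := by exact_mod_cast Fintype.card_pos
  have hF : (0:ℝ) < Fintype.card F := by exact_mod_cast Fintype.card_pos
  rw [Finset.sum_comm, Finset.mul_sum]
  refine Finset.sum_congr rfl fun f _ => ?_
  dsimp only
  rw [Finset.sum_const, Finset.card_univ, nsmul_eq_mul]
  field_simp

end PIRProof


/-- **Theorem 1.** For any N-database K-message PIR code, the average per-node storage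
cost α and the average per-node download cost β satisfy (N-1)·α + β ≥ K. -/
theorem cutset_bound_avg
{N K L : ℕ} {X Y F : Type} {Q S : Fin N → Type}
    [Fintype X] [Nonempty X] [Fintype Y] [Fintype F] [Nonempty F]
    [∀ n, Fintype (Q n)] [∀ n, Fintype (S n)]
    (c : PIRCode N K L X Y F Q S) :
    ((N : ℝ) - 1) * c.alphaAvg + c.betaAvg ≥ K := by
  classical
  have h2X : (2:ℝ) ≤ (Fintype.card X : ℝ) := by exact_mod_cast c.hX
  have hlogX : (0:ℝ) < Real.logb 2 (Fintype.card X) :=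
    Real.logb_pos (by norm_num) (by linarith)
  have hL0 : (0:ℝ) < (L:ℝ) := by exact_mod_cast c.hL
  have hL' : (0:ℝ) < (L : ℝ) * Real.logb 2 (Fintype.card X) := by positivity
  have hF : (0:ℝ) < Fintype.card F := by exact_mod_cast Fintype.card_pos
  have hKm : K - 1 < K := Nat.sub_lt c.hK one_pos
  have key : ∀ n : Fin N, (K : ℝ) ≤ c.betaN n + ∑ m ∈ Finset.univ.erase n, c.alphaN m := by
    intro n
    have hchain := pc_chain c n (K - 1) hKm
    have hK1 : (K - 1) + 1 = K := Nat.succ_pred_eq_of_pos c.hK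
    have hdec : ∑ f : F, pcPsi c n (c.query n ⟨K - 1, hKm⟩ f) (K - 1)
        = ∑ f : F, pcPsi c n (c.query n ⟨K - 1, hKm⟩ f) K := by
      refine Finset.sum_congr rfl fun f _ => ?_
      have hd := pcPsi_decode c n f ⟨K - 1, hKm⟩
      rw [show ((⟨K - 1, hKm⟩ : Fin K) : ℕ) = K - 1 from rfl, hK1] at hd
      exact hd
    have hge : (Fintype.card F : ℝ) * pcHW K L X K
        ≤ ∑ f : F, pcPsi c n (c.query n ⟨K - 1, hKm⟩ f) K := by
      calc (Fintype.card F : ℝ) * pcHW K L X K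
          = ∑ _f : F, pcHW K L X K := by
            rw [Finset.sum_const, Finset.card_univ, nsmul_eq_mul]
        _ ≤ _ := Finset.sum_le_sum fun f _ => pc_psi_ge c n _
    have hle : ∑ f : F, pcPsi c n (c.query n ⟨0, c.hK⟩ f) 0
        ≤ (Fintype.card F : ℝ) * (c.expLen n ⟨0, c.hK⟩ * Real.logb 2 (Fintype.card Y))
          + (Fintype.card F : ℝ) * ∑ m ∈ Finset.univ.erase n, Real.logb 2 (Fintype.card (S m)) := by
      calc ∑ f : F, pcPsi c n (c.query n ⟨0, c.hK⟩ f) 0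
          ≤ ∑ f : F, ((c.len n (c.query n ⟨0, c.hK⟩ f) : ℝ) * Real.logb 2 (Fintype.card Y)
            + ∑ m ∈ Finset.univ.erase n, Real.logb 2 (Fintype.card (S m))) :=
            Finset.sum_le_sum fun f _ => pc_psi_zero_le c n _
        _ = (∑ f : F, (c.len n (c.query n ⟨0, c.hK⟩ f) : ℝ)) * Real.logb 2 (Fintype.card Y)
            + (Fintype.card F : ℝ) * ∑ m ∈ Finset.univ.erase n, Real.logb 2 (Fintype.card (S m)) := by
            rw [Finset.sum_add_distrib, Finset.sum_const, Finset.card_univ, nsmul_eq_mul,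
              ← Finset.sum_mul]
        _ = (Fintype.card F : ℝ) * (c.expLen n ⟨0, c.hK⟩ * Real.logb 2 (Fintype.card Y))
            + (Fintype.card F : ℝ) * ∑ m ∈ Finset.univ.erase n, Real.logb 2 (Fintype.card (S m)) := by
            rw [← pc_expLen c n ⟨0, c.hK⟩]
            ring
    have hHW : pcHW K L X K = ((K * L : ℕ) : ℝ) * Real.logb 2 (Fintype.card X) :=
      pcHW_eq c.hK c.hL le_rfl
    have hmain : (Fintype.card F : ℝ) * pcHW K L X K
        ≤ (Fintype.card F : ℝ) * (c.expLen n ⟨0, c.hK⟩ * Real.logb 2 (Fintype.card Y))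
          + (Fintype.card F : ℝ) * ∑ m ∈ Finset.univ.erase n, Real.logb 2 (Fintype.card (S m)) := by
      have e1 : ∑ f : F, pcPsi c n (c.query n ⟨0, c.hK⟩ f) 0
          = ∑ f : F, pcPsi c n (c.query n ⟨K - 1, hKm⟩ f) K := hchain.trans hdec
      exact (hge.trans (le_of_eq e1.symm)).trans hle
    have hmain2 : (K : ℝ) * ((L : ℝ) * Real.logb 2 (Fintype.card X))
        ≤ c.expLen n ⟨0, c.hK⟩ * Real.logb 2 (Fintype.card Y)
          + ∑ m ∈ Finset.univ.erase n, Real.logb 2 (Fintype.card (S m)) := by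
      rw [← mul_add] at hmain
      have := le_of_mul_le_mul_left hmain hF
      rw [hHW] at this
      push_cast at this ⊢
      linarith
    have hbn : c.betaN n = c.expLen n ⟨0, c.hK⟩ * Real.logb 2 (Fintype.card Y)
        / ((L : ℝ) * Real.logb 2 (Fintype.card X)) := rfl
    have han : ∀ m, c.alphaN m = Real.logb 2 (Fintype.card (S m))
        / ((L : ℝ) * Real.logb 2 (Fintype.card X)) := fun m => rfl
    rw [hbn, Finset.sum_congr rfl (fun m _ => han m), ← Finset.sum_div,
      ← add_div, le_div_iff₀ hL']
    exact hmain2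
  have hN : (0:ℝ) < N := by exact_mod_cast c.hN
  have hsum : (N : ℝ) * K ≤ ∑ n, (c.betaN n + ∑ m ∈ Finset.univ.erase n, c.alphaN m) := by
    calc (N : ℝ) * K = ∑ _n : Fin N, (K : ℝ) := by
          rw [Finset.sum_const, Finset.card_univ, Fintype.card_fin, nsmul_eq_mul]
      _ ≤ _ := Finset.sum_le_sum fun n _ => key n
  have hsplit : ∑ n, (c.betaN n + ∑ m ∈ Finset.univ.erase n, c.alphaN m)
      = (∑ n, c.betaN n) + ((N : ℝ) - 1) * ∑ n, c.alphaN n := by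
    rw [Finset.sum_add_distrib]
    congr 1
    have herase : ∀ n : Fin N, ∑ m ∈ Finset.univ.erase n, c.alphaN m
        = (∑ m, c.alphaN m) - c.alphaN n := fun n =>
      Finset.sum_erase_eq_sub (Finset.mem_univ n)
    rw [Finset.sum_congr rfl (fun n _ => herase n), Finset.sum_sub_distrib,
      Finset.sum_const, Finset.card_univ, Fintype.card_fin, nsmul_eq_mul]
    ring
  rw [hsplit] at hsum
  unfold PIRCode.alphaAvg PIRCode.betaAvg
  rw [ge_iff_le, ← sub_nonneg]
  have hexp : ((N : ℝ) - 1) * ((∑ n, c.alphaN n) / N) + (∑ n, c.betaN n) / N - K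
      = (((∑ n, c.betaN n) + ((N : ℝ) - 1) * ∑ n, c.alphaN n) - (N : ℝ) * K) / N := by
    field_simp
    ring
  rw [hexp]
  have : (0:ℝ) ≤ ((∑ n, c.betaN n) + ((N : ℝ) - 1) * ∑ n, c.alphaN n) - (N : ℝ) * K := by
    linarith
  positivity
end
end

section
/- For any N-database K-message private information retrieval code whose average per-node storage cost attains the minimum possible value α = K/N, the average per-node download cost satisfies β ≥ K/N. -/
open scoped Classical
open Real

noncomputable section

/-- At the minimum storage point α = K/N, the download cost satisfies β ≥ K/N. -/
theorem min_storage_download_cost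
{N K L : ℕ} {X Y F : Type} {Q S : Fin N → Type}
    [Fintype X] [Nonempty X] [Fintype Y] [Fintype F] [Nonempty F]
    [∀ n, Fintype (Q n)] [∀ n, Fintype (S n)]
    (c : PIRCode N K L X Y F Q S) (halpha : c.alphaAvg = (K : ℝ) / N) :
    c.betaAvg ≥ (K : ℝ) / N := by
  classical
  obtain ⟨f₀⟩ := ‹Nonempty F›
  have hKpos := c.hK
  have hLpos : (0:ℝ) < L := by exact_mod_cast c.hL
  have hNpos : (0:ℝ) < N := by exact_mod_cast c.hN
  have hX1 : (1:ℝ) < (Fintype.card X : ℝ) := by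
    have := c.hX; exact_mod_cast lt_of_lt_of_le one_lt_two this
  have hlogX : 0 < Real.logb 2 (Fintype.card X) := Real.logb_pos one_lt_two hX1
  have hD : 0 < (L:ℝ) * Real.logb 2 (Fintype.card X) := mul_pos hLpos hlogX
  -- every sample point has positive probability
  have hppos : ∀ ω : PIRSamp K L X F, 0 < (pirP K L X F).p ω := by
    intro ω
    have h1 : 0 < Fintype.card (PIRSamp K L X F) := Fintype.card_pos
    have : (0:ℝ) < (Fintype.card (PIRSamp K L X F) : ℝ) := by exact_mod_cast h1
    simpa [pirP, uniformProb] using inv_pos.mpr this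
  -- the joint storage map
  set Φ : (Fin K → Fin L → X) → ((n : Fin N) → S n) := fun w n => c.store n w with hΦdef
  have hΦinj : Function.Injective Φ := by
    intro w w' h
    funext k
    refine c.correct k (w, f₀) (w', f₀) rfl (fun n => ?_)
    have h1 := congrFun h n
    simp only [hΦdef] at h1
    rw [h1]
  -- total storage is exactly K·L·log|X| bits
  have hSpos : ∀ n, 0 < Fintype.card (S n) :=
    fun n => Fintype.card_pos_iff.mpr ⟨c.store n (Classical.arbitrary _)⟩
  have hsumα : (∑ n, c.alphaN n) = (K : ℝ) := by
    have h := halpha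
    unfold PIRCode.alphaAvg at h
    rw [div_eq_div_iff (ne_of_gt hNpos) (ne_of_gt hNpos)] at h
    exact mul_right_cancel₀ (ne_of_gt hNpos) h
  have hsumlog : ∑ n, Real.logb 2 (Fintype.card (S n))
      = (K : ℝ) * ((L:ℝ) * Real.logb 2 (Fintype.card X)) := by
    have h : (∑ n, Real.logb 2 (Fintype.card (S n))) / ((L:ℝ) * Real.logb 2 (Fintype.card X))
        = (K : ℝ) := by
      unfold PIRCode.alphaN at hsumα
      rw [← Finset.sum_div] at hsumα
      exact hsumα
    rw [div_eq_iff (ne_of_gt hD)] at h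
    exact h
  have hprodR : (∏ n, (Fintype.card (S n) : ℝ)) = (Fintype.card X : ℝ) ^ (K * L) := by
    have hne : ∀ n ∈ (Finset.univ : Finset (Fin N)), ((Fintype.card (S n) : ℝ)) ≠ 0 := by
      intro n _
      exact_mod_cast (hSpos n).ne'
    have hlog : Real.logb 2 (∏ n, (Fintype.card (S n) : ℝ))
        = Real.logb 2 ((Fintype.card X : ℝ) ^ (K * L)) := by
      rw [Real.logb_prod _ _ hne, Real.logb_pow, hsumlog]
      push_cast
      ring
    have hp1 : (0:ℝ) < ∏ n, (Fintype.card (S n) : ℝ) :=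
      Finset.prod_pos (fun n _ => by exact_mod_cast hSpos n)
    have hp2 : (0:ℝ) < (Fintype.card X : ℝ) ^ (K * L) := pow_pos (by linarith) _
    have hloge : Real.log (∏ n, (Fintype.card (S n) : ℝ))
        = Real.log ((Fintype.card X : ℝ) ^ (K * L)) := by
      have hlog2 : Real.log 2 ≠ 0 := ne_of_gt (Real.log_pos one_lt_two)
      have h := hlog
      simp only [Real.logb] at h
      field_simp at h
      rw [Real.log_pow]
      push_cast
      rw [h, Real.log_pow, Nat.cast_mul]
    exact Real.log_injOn_pos (Set.mem_Ioi.mpr hp1) (Set.mem_Ioi.mpr hp2) hloge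
  have hprodN : (∏ n, Fintype.card (S n)) = Fintype.card X ^ (K * L) := by
    have : ((∏ n, Fintype.card (S n) : ℕ) : ℝ) = ((Fintype.card X ^ (K * L) : ℕ) : ℝ) := by
      push_cast
      exact hprodR
    exact_mod_cast this
  have hcards : Fintype.card (Fin K → Fin L → X) = Fintype.card ((n : Fin N) → S n) := by
    have h1 : Fintype.card ((n : Fin N) → S n) = ∏ n, Fintype.card (S n) := Fintype.card_pi
    rw [h1, hprodN, Fintype.card_fun, Fintype.card_fun,
      Fintype.card_fin, Fintype.card_fin, ← pow_mul, Nat.mul_comm]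
  have hΦbij : Function.Bijective Φ :=
    (Fintype.bijective_iff_injective_and_card Φ).mpr ⟨hΦinj, hcards⟩
  -- key step: each answer map is injective on the stored content
  have hkey : ∀ (n : Fin N) (k : Fin K) (f : F),
      Real.logb 2 (Fintype.card (S n))
        ≤ (c.len n (c.query n k f) : ℝ) * Real.logb 2 (Fintype.card Y) := by
    intro n k f
    set q := c.query n k f with hq
    have hinj : Function.Injective (c.answer n q) := by
      intro s s' hss
      by_contra hne
      set w₀ : Fin K → Fin L → X := Classical.arbitrary _ with hw₀
      obtain ⟨w, hw⟩ := hΦbij.2 (Function.update (Φ w₀) n s)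
      obtain ⟨w', hw'⟩ := hΦbij.2 (Function.update (Φ w₀) n s')
      have hwn : c.store n w = s := by
        have h := congrFun hw n
        simpa [hΦdef] using h
      have hwn' : c.store n w' = s' := by
        have h := congrFun hw' n
        simpa [hΦdef] using h
      have hwm : ∀ m, m ≠ n → c.store m w = c.store m w' := by
        intro m hm
        have h1 := congrFun hw m
        have h2 := congrFun hw' m
        rw [Function.update_of_ne hm] at h1 h2
        simp only [hΦdef] at h1 h2
        rw [h1, h2]
      have hww : w ≠ w' := by
        intro h
        exact hne (by rw [← hwn, ← hwn', h])
      obtain ⟨k', hk'⟩ : ∃ k', w k' ≠ w' k' := by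
        by_contra hall
        push_neg at hall
        exact hww (funext hall)
      -- privacy gives a key realizing query q for message k'
      have hpos : 0 < (pirP K L X F).prob (fun ω => c.query n k ω.2 = q) := by
        unfold FinProb.prob
        refine Finset.sum_pos' (fun ω _ => ?_) ⟨(w₀, f), Finset.mem_univ _, ?_⟩
        · split
          · exact (hppos ω).le
          · exact le_refl 0
        · have hc : c.query n k (w₀, f).2 = q := hq.symm
          rw [if_pos hc]
          exact hppos (w₀, f)
      rw [c.privacy n k k' q] at hpos
      obtain ⟨ω', hω'⟩ : ∃ ω' : PIRSamp K L X F, c.query n k' ω'.2 = q := by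
        by_contra hnone
        push_neg at hnone
        have : (pirP K L X F).prob (fun ω => c.query n k' ω.2 = q) = 0 := by
          unfold FinProb.prob
          exact Finset.sum_eq_zero (fun ω _ => by rw [if_neg (hnone ω)])
        rw [this] at hpos
        exact lt_irrefl 0 hpos
      have hans : ∀ m : Fin N,
          List.ofFn (c.answer m (c.query m k' ω'.2) (c.store m w))
            = List.ofFn (c.answer m (c.query m k' ω'.2) (c.store m w')) := by
        intro m
        by_cases hm : m = n
        · subst hm
          rw [hω', hwn, hwn', hss]
        · rw [hwm m hm]
      exact hk' (c.correct k' (w, ω'.2) (w', ω'.2) rfl hans)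
    have hcard : Fintype.card (S n) ≤ Fintype.card Y ^ (c.len n q) := by
      have h := Fintype.card_le_of_injective _ hinj
      rwa [Fintype.card_fun, Fintype.card_fin] at h
    have hYpow : (0:ℝ) < ((Fintype.card Y ^ c.len n q : ℕ) : ℝ) := by
      have : 0 < Fintype.card Y ^ c.len n q := lt_of_lt_of_le (hSpos n) hcard
      exact_mod_cast this
    calc Real.logb 2 (Fintype.card (S n))
        ≤ Real.logb 2 ((Fintype.card Y ^ c.len n q : ℕ) : ℝ) := by
          apply Real.logb_le_logb_of_le one_lt_two
          · exact_mod_cast hSpos n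
          · exact_mod_cast hcard
      _ = (c.len n q : ℝ) * Real.logb 2 (Fintype.card Y) := by
          push_cast
          rw [Real.logb_pow]
  -- per-database: download ≥ storage
  have hbn : ∀ n, c.alphaN n ≤ c.betaN n := by
    intro n
    unfold PIRCode.betaN PIRCode.betaNK PIRCode.alphaN
    rw [div_le_div_iff₀ hD hD]
    apply mul_le_mul_of_nonneg_right _ (le_of_lt hD)
    have h1 : Real.logb 2 (Fintype.card (S n))
        = ∑ ω : PIRSamp K L X F, (pirP K L X F).p ω * Real.logb 2 (Fintype.card (S n)) := by
      rw [← Finset.sum_mul, (pirP K L X F).sum_one, one_mul]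
    rw [h1]
    unfold PIRCode.expLen
    rw [Finset.sum_mul]
    apply Finset.sum_le_sum
    intro ω _
    rw [mul_assoc]
    exact mul_le_mul_of_nonneg_left (hkey n ⟨0, hKpos⟩ ω.2) (hppos ω).le
  -- conclude
  have hsums : (∑ n, c.alphaN n) ≤ ∑ n, c.betaN n := Finset.sum_le_sum (fun n _ => hbn n)
  show (K : ℝ) / N ≤ c.betaAvg
  unfold PIRCode.betaAvg
  rw [← hsumα]
  exact (div_le_div_iff_of_pos_right hNpos).mpr hsums
end
end
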